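/- arXiv:1203.1696 — 4 statements merged into one kernel-verified Lean document; each statement's English description precedes it below -/
import Mathlib

section
/- For the group law F(x,y) = (x + y + bxy)/(1 − cxy) over a commutative ring R with b² − 4c invertible, F is a one-dimensional formal group law: F(x,0) = x, F(x,y) = F(y,x), and F(F(x,y),z) = F(x,F(y,z)) as formal power series. -/
/-!
Write `F(p, q) = N(p, q) / D(p, q)` with `N = p + q + bpq` and `D = 1 - cpq`. Substituting the
fraction `F(p, q) = N₁ / D₁` into `F(·, r)` and clearing `D₁` gives
`F(F(p, q), r) = (N₁ + r D₁ + b N₁ r) / (D₁ - c N₁ r)`, and symmetrically for `F(p, F(q, r))`.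
Both denominators have constant coefficient `1` once `p` and `r` have none, so they are units,
and the two fractions agree by a polynomial identity in `p, q, r, b, c`.
-/

open MvPowerSeries

namespace MvPowerSeries

variable {σ R : Type*} [CommRing R]

theorem eq_mul_invOfUnit_one_iff {φ a x : MvPowerSeries σ R} (hφ : constantCoeff φ = 1) :
    x = a * invOfUnit φ 1 ↔ x * φ = a := by
  have hinv : φ * invOfUnit φ 1 = 1 := mul_invOfUnit φ 1 (by simp [hφ])
  constructor
  · rintro rfl
    rw [mul_assoc, mul_comm _ φ, hinv, mul_one]
  · rintro rfl
    rw [mul_assoc, hinv, mul_one]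

end MvPowerSeries

section RationalFGL

variable {σ R : Type*} [CommRing R] (b c : R)

noncomputable def rationalFGL (p q : MvPowerSeries σ R) : MvPowerSeries σ R :=
  (p + q + C b * p * q) * invOfUnit (1 - C c * p * q) 1

variable {b c}

theorem rationalFGL_zero_right (p : MvPowerSeries σ R) : rationalFGL b c p 0 = p := by
  have hinv : invOfUnit (1 : MvPowerSeries σ R) 1 = 1 := by
    simpa using mul_invOfUnit (1 : MvPowerSeries σ R) 1 (by simp)
  simp [rationalFGL, hinv]

theorem rationalFGL_comm (p q : MvPowerSeries σ R) :
    rationalFGL b c p q = rationalFGL b c q p := by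
  simp only [rationalFGL]
  ring_nf

theorem eq_rationalFGL_iff {p q x : MvPowerSeries σ R}
    (hpq : constantCoeff p * constantCoeff q = 0) :
    x = rationalFGL b c p q ↔ x * (1 - C c * p * q) = p + q + C b * p * q :=
  eq_mul_invOfUnit_one_iff (by simp [mul_assoc, hpq])

theorem rationalFGL_mul_denom {p q : MvPowerSeries σ R}
    (hpq : constantCoeff p * constantCoeff q = 0) :
    rationalFGL b c p q * (1 - C c * p * q) = p + q + C b * p * q :=
  (eq_rationalFGL_iff hpq).1 rfl

theorem rationalFGL_mul_of_mul_eq {s r N D : MvPowerSeries σ R}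
    (hsr : constantCoeff s * constantCoeff r = 0) (hs : s * D = N) :
    rationalFGL b c s r * (D - C c * N * r) = N + r * D + C b * N * r := by
  have h := rationalFGL_mul_denom (b := b) (c := c) hsr
  calc rationalFGL b c s r * (D - C c * N * r)
      = rationalFGL b c s r * (1 - C c * s * r) * D := by rw [← hs]; ring
    _ = N + r * D + C b * N * r := by rw [h, ← hs]; ring

theorem rationalFGL_assoc {p q r : MvPowerSeries σ R}
    (hp : constantCoeff p = 0) (hr : constantCoeff r = 0) :
    rationalFGL b c (rationalFGL b c p q) r = rationalFGL b c p (rationalFGL b c q r) := by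
  set N₁ := p + q + C b * p * q
  set N₂ := q + r + C b * q * r
  set E₁ := (1 - C c * p * q) - C c * N₁ * r
  set E₂ := (1 - C c * q * r) - C c * N₂ * p
  have hL : rationalFGL b c (rationalFGL b c p q) r * E₁ =
      N₁ + r * (1 - C c * p * q) + C b * N₁ * r :=
    rationalFGL_mul_of_mul_eq (by simp [hr]) (rationalFGL_mul_denom (by simp [hp]))
  have hR : rationalFGL b c p (rationalFGL b c q r) * E₂ =
      N₂ + p * (1 - C c * q * r) + C b * N₂ * p := by
    rw [rationalFGL_comm]
    exact rationalFGL_mul_of_mul_eq (by simp [hp]) (rationalFGL_mul_denom (by simp [hr]))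
  have hE : IsUnit (E₁ * E₂) := by
    simp [isUnit_iff_constantCoeff, E₁, E₂, N₁, N₂, hp, hr]
  apply hE.mul_left_cancel
  calc E₁ * E₂ * rationalFGL b c (rationalFGL b c p q) r
      = (N₁ + r * (1 - C c * p * q) + C b * N₁ * r) * E₂ := by rw [← hL]; ring
    _ = (N₂ + p * (1 - C c * q * r) + C b * N₂ * p) * E₁ := by
      simp only [N₁, N₂, E₁, E₂]; ring
    _ = E₁ * E₂ * rationalFGL b c p (rationalFGL b c q r) := by rw [← hR]; ring

end RationalFGL

theorem stmt_8_general {R : Type*} [CommRing R] (b c : R) :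
    let F : MvPowerSeries (Fin 3) R → MvPowerSeries (Fin 3) R → MvPowerSeries (Fin 3) R :=
      fun p q => (p + q + MvPowerSeries.C (σ := Fin 3) (R := R) b * p * q) *
        MvPowerSeries.invOfUnit (1 - MvPowerSeries.C (σ := Fin 3) (R := R) c * p * q) 1
    F (X 0) 0 = X 0 ∧
    F (X 0) (X 1) = F (X 1) (X 0) ∧
    F (F (X 0) (X 1)) (X 2) = F (X 0) (F (X 1) (X 2)) :=
  ⟨rationalFGL_zero_right _, rationalFGL_comm _ _,
    rationalFGL_assoc (constantCoeff_X 0) (constantCoeff_X 2)⟩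

/-- `F(x,y) = (x + y + bxy)/(1 − cxy)` over a commutative ring `R` with `b² − 4c`
invertible is a one-dimensional formal group law: `F(x,0) = x`, `F(x,y) = F(y,x)` and
`F(F(x,y),z) = F(x,F(y,z))` as formal power series (in three variables `x, y, z`). -/
theorem stmt_8 {R : Type*} [CommRing R] (b c : R) (h : IsUnit (b ^ 2 - 4 * c)) :
    let F : MvPowerSeries (Fin 3) R → MvPowerSeries (Fin 3) R → MvPowerSeries (Fin 3) R :=
      fun p q => (p + q + MvPowerSeries.C (σ := Fin 3) (R := R) b * p * q) *
        MvPowerSeries.invOfUnit (1 - MvPowerSeries.C (σ := Fin 3) (R := R) c * p * q) 1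
    F (X 0) 0 = X 0 ∧
    F (X 0) (X 1) = F (X 1) (X 0) ∧
    F (F (X 0) (X 1)) (X 2) = F (X 0) (F (X 1) (X 2)) :=
  stmt_8_general b c
end

section
/- The formal group law F(x,y) = (x + y + 3xy)/(1 − 3xy) over ℤ[1/3] is not isomorphic to the multiplicative formal group law over ℤ[1/3]: there is no power series f(t) = t + a₂t² + … ∈ ℤ[1/3]⟦t⟧ with f(F(x,y)) = f(x) + f(y) + f(x)f(y). -/
open MvPowerSeries

/-- Substitution of a one-variable power series `f` into a multivariate power series `F`
with zero constant term: the coefficient of `f ∘ F` at a multidegree `d` is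
`∑ₙ (coeff n f) · (coeff d Fⁿ)`, a finite sum since `coeff d (Fⁿ) = 0` for `n > |d|`. -/
noncomputable def composePS {R : Type*} [CommRing R]
    (f : PowerSeries R) (F : MvPowerSeries (Fin 2) R) : MvPowerSeries (Fin 2) R :=
  fun d => ∑ n ∈ Finset.range (d.sum (fun _ m => m) + 1),
    PowerSeries.coeff (R := R) n f * MvPowerSeries.coeff (R := R) d (F ^ n)

/-!
Write `F(x,y) = x + y·Φ(x,y)` with `Φ = (1 + 3x + 3x²)/(1 − 3xy)`. Only the terms of degree one
in `y` of `f(F(x,y)) = f(x) + f(y) + f(x)f(y)` are needed: on the left they are `y·f'(x)·Φ(x,0)`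
(the higher powers of `y·Φ` do not contribute), on the right `y·f'(0)·(1 + f(x))`. Hence `f`
satisfies the invariant differential equation `f'(x)(1 + 3x + 3x²) = 1 + f(x)`, whose recursion
forces `a₂ = −1`, `a₃ = 2/3`, `a₄ = 1/6`. But `6` is not invertible in `ℤ[1/3]`.
-/

lemma finsupp_fin_two_ext {d e : Fin 2 →₀ ℕ} (h0 : d 0 = e 0) (h1 : d 1 = e 1) : d = e := by
  ext a; fin_cases a <;> assumption

noncomputable def bidegree (i j : ℕ) : Fin 2 →₀ ℕ := Finsupp.single 0 i + Finsupp.single 1 j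

@[simp] lemma bidegree_apply_zero (i j : ℕ) : bidegree i j 0 = i := by simp [bidegree]

@[simp] lemma bidegree_apply_one (i j : ℕ) : bidegree i j 1 = j := by simp [bidegree]

@[simp] lemma bidegree_inj {i j k l : ℕ} : bidegree i j = bidegree k l ↔ i = k ∧ j = l :=
  ⟨fun h => ⟨by simpa using DFunLike.congr_fun h 0, by simpa using DFunLike.congr_fun h 1⟩,
    fun ⟨hi, hj⟩ => hi ▸ hj ▸ rfl⟩

@[simp] lemma bidegree_eq_zero {i j : ℕ} : bidegree i j = 0 ↔ i = 0 ∧ j = 0 := by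
  rw [show (0 : Fin 2 →₀ ℕ) = bidegree 0 0 by simp [bidegree], bidegree_inj]

lemma bidegree_eta (d : Fin 2 →₀ ℕ) : bidegree (d 0) (d 1) = d :=
  finsupp_fin_two_ext (by simp) (by simp)

lemma single_zero_eq_bidegree (i : ℕ) : Finsupp.single 0 i = bidegree i 0 := by simp [bidegree]

lemma single_one_eq_bidegree (j : ℕ) : Finsupp.single 1 j = bidegree 0 j := by simp [bidegree]

lemma bidegree_sum (i j : ℕ) : (bidegree i j).sum (fun _ m => m) = i + j := by
  simp [Finsupp.sum_fintype, Fin.sum_univ_two]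

lemma exists_add_pow_succ_eq {A : Type*} [CommSemiring A] (a b : A) (k : ℕ) :
    ∃ c, (a + b) ^ (k + 1) = a ^ (k + 1) + (k + 1) * a ^ k * b + b ^ 2 * c := by
  induction k with
  | zero => exact ⟨0, by simp⟩
  | succ k ih =>
    obtain ⟨c, hc⟩ := ih
    exact ⟨(k + 1) * a ^ k + c * (a + b), by rw [pow_succ, hc]; push_cast; ring⟩

section Coefficients

variable {R : Type*} [CommRing R]

lemma coeff_bidegree_X_zero_pow_mul (i j m : ℕ) (p : MvPowerSeries (Fin 2) R) :
    coeff (bidegree i j) (X 0 ^ m * p) = if m ≤ i then coeff (bidegree (i - m) j) p else 0 := by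
  rw [X_pow_eq, coeff_monomial_mul, one_mul]
  by_cases hm : m ≤ i
  · rw [if_pos, if_pos hm]
    · congr 2
      refine finsupp_fin_two_ext ?_ ?_ <;> simp
    · intro a; fin_cases a <;> simp [hm]
  · rw [if_neg, if_neg hm]
    intro h; exact hm (by simpa using h 0)

lemma coeff_bidegree_X_one_pow_mul (i j m : ℕ) (p : MvPowerSeries (Fin 2) R) :
    coeff (bidegree i j) (X 1 ^ m * p) = if m ≤ j then coeff (bidegree i (j - m)) p else 0 := by
  rw [X_pow_eq, coeff_monomial_mul, one_mul]
  by_cases hm : m ≤ j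
  · rw [if_pos, if_pos hm]
    · congr 2
      refine finsupp_fin_two_ext ?_ ?_ <;> simp
    · intro a; fin_cases a <;> simp [hm]
  · rw [if_neg, if_neg hm]
    intro h; exact hm (by simpa using h 1)

lemma coeff_bidegree_one_pow_X_zero_add_X_one_mul (H : MvPowerSeries (Fin 2) R) (n k : ℕ) :
    coeff (bidegree n 1) ((X 0 + X 1 * H) ^ (k + 1)) =
      if k ≤ n then (k + 1) * coeff (bidegree (n - k) 0) H else 0 := by
  obtain ⟨c, hc⟩ := exists_add_pow_succ_eq (X 0) (X 1 * H) k
  have hlinear : ((k : MvPowerSeries (Fin 2) R) + 1) * X 0 ^ k * (X 1 * H) =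
      X 0 ^ k * (X 1 ^ 1 * (C ((k : R) + 1) * H)) := by
    rw [map_add, map_natCast, map_one]; ring
  rw [hc, hlinear, mul_pow, mul_assoc, map_add, map_add, ← mul_one (X 0 ^ (k + 1)),
    coeff_bidegree_X_zero_pow_mul, coeff_bidegree_X_zero_pow_mul, coeff_bidegree_X_one_pow_mul,
    coeff_bidegree_X_one_pow_mul]
  simp only [coeff_one, bidegree_eq_zero, coeff_C_mul]
  simp

variable (f : PowerSeries R)

lemma coeff_composePS (G : MvPowerSeries (Fin 2) R) (d : Fin 2 →₀ ℕ) :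
    coeff d (composePS f G) = ∑ n ∈ Finset.range (d.sum (fun _ m => m) + 1),
      PowerSeries.coeff n f * coeff d (G ^ n) := rfl

open scoped PowerSeries in
lemma coeff_bidegree_one_composePS_X_zero_add_X_one_mul (h : PowerSeries R)
    (H : MvPowerSeries (Fin 2) R) (hH : ∀ m, coeff (bidegree m 0) H = PowerSeries.coeff m h)
    (n : ℕ) :
    coeff (bidegree n 1) (composePS f (X 0 + X 1 * H)) = PowerSeries.coeff n (d⁄dX R f * h) := by
  rw [coeff_composePS, bidegree_sum, Finset.sum_range_succ', PowerSeries.coeff_mul,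
    Finset.Nat.sum_antidiagonal_eq_sum_range_succ_mk]
  simp only [pow_zero, coeff_one, bidegree_eq_zero, one_ne_zero, and_false, if_false, mul_zero,
    add_zero, coeff_bidegree_one_pow_X_zero_add_X_one_mul, PowerSeries.coeff_derivative, hH]
  refine Finset.sum_congr rfl fun k hk => ?_
  rw [if_pos (Nat.lt_succ_iff.mp (Finset.mem_range.mp hk))]
  ring

lemma coeff_composePS_X (s : Fin 2) (d : Fin 2 →₀ ℕ) :
    coeff d (composePS f (X s)) =
      if d = Finsupp.single s (d s) then PowerSeries.coeff (d s) f else 0 := by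
  rw [coeff_composePS]
  simp only [coeff_X_pow, mul_ite, mul_one, mul_zero]
  split_ifs with hd
  · rw [Finset.sum_eq_single (d s)]
    · simp [← hd]
    · intro k _ hk; rw [if_neg]; rintro rfl; simp at hk
    · intro hk; rw [hd] at hk; simp at hk
  · refine Finset.sum_eq_zero fun k _ => if_neg ?_
    rintro rfl; simp at hd

lemma coeff_bidegree_composePS_X_zero (i j : ℕ) :
    coeff (bidegree i j) (composePS f (X 0)) = if j = 0 then PowerSeries.coeff i f else 0 := by
  simp [coeff_composePS_X, single_zero_eq_bidegree]

lemma coeff_bidegree_composePS_X_one (i j : ℕ) :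
    coeff (bidegree i j) (composePS f (X 1)) = if i = 0 then PowerSeries.coeff j f else 0 := by
  simp [coeff_composePS_X, single_one_eq_bidegree]

lemma coeff_bidegree_one_composePS_X_zero_mul_composePS_X_one (i : ℕ) :
    coeff (bidegree i 1) (composePS f (X 0) * composePS f (X 1)) =
      PowerSeries.coeff i f * PowerSeries.coeff 1 f := by
  rw [coeff_mul, Finset.sum_eq_single (bidegree i 0, bidegree 0 1)]
  · simp [coeff_bidegree_composePS_X_zero, coeff_bidegree_composePS_X_one]
  · rintro ⟨p, q⟩ hpq hne
    rw [Finset.HasAntidiagonal.mem_antidiagonal] at hpq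
    have h0 : p 0 + q 0 = i := by simpa using DFunLike.congr_fun hpq 0
    have h1 : p 1 + q 1 = 1 := by simpa using DFunLike.congr_fun hpq 1
    rw [← bidegree_eta p, ← bidegree_eta q, coeff_bidegree_composePS_X_zero,
      coeff_bidegree_composePS_X_one]
    split_ifs with hp hq
    · refine absurd ?_ hne
      rw [← bidegree_eta p, ← bidegree_eta q, hp, hq, Prod.mk.injEq, bidegree_inj, bidegree_inj]
      omega
    all_goals simp
  · intro h
    exact absurd (by simp [bidegree]) h

lemma coeff_bidegree_one_composePS_add_add_mul (n : ℕ) :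
    coeff (bidegree n 1)
        (composePS f (X 0) + composePS f (X 1) + composePS f (X 0) * composePS f (X 1)) =
      PowerSeries.coeff 1 f * PowerSeries.coeff n (1 + f) := by
  simp only [map_add, coeff_bidegree_one_composePS_X_zero_mul_composePS_X_one,
    coeff_bidegree_composePS_X_zero, coeff_bidegree_composePS_X_one, PowerSeries.coeff_one,
    one_ne_zero, if_false]
  split_ifs <;> ring

end Coefficients

section DifferenceQuotient

variable (R : Type*) [CommRing R]

noncomputable def fglDiffQuot : MvPowerSeries (Fin 2) R :=
  (1 + C 3 * X 0 + C 3 * X 0 ^ 2) * invOfUnit (1 - 3 * X 0 * X 1) 1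

lemma one_sub_three_mul_invOfUnit :
    (1 - 3 * X 0 * X 1 : MvPowerSeries (Fin 2) R) * invOfUnit (1 - 3 * X 0 * X 1) 1 = 1 :=
  mul_invOfUnit _ _ (by simp)

lemma fgl_eq_X_zero_add_X_one_mul_fglDiffQuot :
    (X 0 + X 1 + 3 * X 0 * X 1) * invOfUnit (1 - 3 * X 0 * X 1) 1 =
      (X 0 + X 1 * fglDiffQuot R : MvPowerSeries (Fin 2) R) := by
  rw [fglDiffQuot, map_ofNat]
  linear_combination X 0 * one_sub_three_mul_invOfUnit R

lemma coeff_bidegree_zero_fglDiffQuot (m : ℕ) :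
    coeff (bidegree m 0) (fglDiffQuot R) = PowerSeries.coeff m
      (1 + PowerSeries.C 3 * PowerSeries.X + PowerSeries.C 3 * PowerSeries.X ^ 2) := by
  have h : fglDiffQuot R =
      (1 + C 3 * X 0 + C 3 * X 0 ^ 2) + X 1 ^ 1 * (3 * X 0 * fglDiffQuot R) := by
    rw [fglDiffQuot]
    linear_combination (1 + C 3 * X 0 + C 3 * X 0 ^ 2 : MvPowerSeries (Fin 2) R) *
      one_sub_three_mul_invOfUnit R
  rw [h, map_add, coeff_bidegree_X_one_pow_mul, if_neg (by norm_num), add_zero]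
  simp only [map_add, coeff_C_mul, PowerSeries.coeff_C_mul, coeff_X_pow, PowerSeries.coeff_X_pow,
    coeff_X, PowerSeries.coeff_X, coeff_one, PowerSeries.coeff_one, single_zero_eq_bidegree]
  simp

end DifferenceQuotient

open scoped PowerSeries in
lemma derivative_mul_eq_one_add_of_composePS_eq {R : Type*} [CommRing R] (f : PowerSeries R)
    (h1 : PowerSeries.coeff 1 f = 1)
    (hf : composePS f ((X 0 + X 1 + 3 * X 0 * X 1) * invOfUnit (1 - 3 * X 0 * X 1) 1) =
      composePS f (X 0) + composePS f (X 1) + composePS f (X 0) * composePS f (X 1)) :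
    d⁄dX R f * (1 + PowerSeries.C 3 * PowerSeries.X + PowerSeries.C 3 * PowerSeries.X ^ 2) =
      1 + f := by
  ext n
  have hn := congrArg (coeff (bidegree n 1)) hf
  rwa [fgl_eq_X_zero_add_X_one_mul_fglDiffQuot,
    coeff_bidegree_one_composePS_X_zero_add_X_one_mul _ _ _ (coeff_bidegree_zero_fglDiffQuot R),
    coeff_bidegree_one_composePS_add_add_mul, h1, one_mul] at hn

namespace PowerSeries

lemma twelve_mul_coeff_four_eq {R : Type*} [CommRing R] {f : PowerSeries R}
    (hf : d⁄dX R f * (1 + C 3 * X + C 3 * X ^ 2) = 1 + f) :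
    12 * coeff 4 f = 2 * coeff 1 f := by
  have hf' : d⁄dX R f + C 3 * (d⁄dX R f * X) + C 3 * (d⁄dX R f * X ^ 2) = 1 + f := by
    rw [← hf]; ring
  have e1 := congrArg (coeff 1) hf'
  have e2 := congrArg (coeff 2) hf'
  have e3 := congrArg (coeff 3) hf'
  simp [coeff_succ_mul_X, coeff_mul_X_pow', coeff_one, coeff_derivative] at e1 e2 e3
  linear_combination 11 * e1 - 8 * e2 + 3 * e3

end PowerSeries

lemma twelve_mul_ne_two (c : Localization.Away (3 : ℤ)) : 12 * c ≠ 2 := by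
  have h3 : IsUnit (Int.castRingHom (ZMod 4) 3) := IsUnit.of_mul_eq_one 3 (by decide)
  intro h
  have h4 := congrArg (Localization.awayLift (Int.castRingHom (ZMod 4)) 3 h3) h
  rw [map_mul, map_ofNat, map_ofNat, show (12 : ZMod 4) = 0 by decide, zero_mul] at h4
  exact absurd h4 (by decide)

/-- The formal group law `F(x,y) = (x + y + 3xy)/(1 − 3xy)` over `ℤ[1/3]` is not
isomorphic to the multiplicative formal group law over `ℤ[1/3]`: there is no power
series `f(t) = t + a₂t² + ⋯` with `f(F(x,y)) = f(x) + f(y) + f(x)f(y)`. -/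
theorem stmt_10 :
    let R := Localization.Away (3 : ℤ)
    let F : MvPowerSeries (Fin 2) R :=
      (X 0 + X 1 + 3 * X 0 * X 1) * MvPowerSeries.invOfUnit (1 - 3 * X 0 * X 1) 1
    ¬∃ f : PowerSeries R,
      PowerSeries.coeff (R := R) 0 f = 0 ∧ PowerSeries.coeff (R := R) 1 f = 1 ∧
      composePS f F =
        composePS f (X 0) + composePS f (X 1) + composePS f (X 0) * composePS f (X 1) := by
  intro R F
  rintro ⟨f, -, h1, hf⟩
  have h12 := PowerSeries.twelve_mul_coeff_four_eq
    (derivative_mul_eq_one_add_of_composePS_eq f h1 hf)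
  rw [h1, mul_one] at h12
  exact twelve_mul_ne_two _ h12
end

section
/- Let T be a commutative ring with an action of C₂ = {1,σ} such that ℤ → T is a Galois extension with group C₂ (e.g., T faithfully flat over R = T^{C₂} and T ⊗_R T ≅ T × T via (x⊗y) ↦ (xy, xσ(y))). Then for all i > 0, the group cohomology Hⁱ(C₂; T) vanishes and H⁰(C₂; T) = R. -/
open TensorProduct

/-!
The trace `t ↦ t + σ t` is `R`-linear with values in `R`. Pulling `(1, 0)` back along the
Galois isomorphism gives `xᵢ, yᵢ` with `∑ xᵢ yᵢ = 1` and `∑ xᵢ σ(yᵢ) = 0`, whence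
`t = ∑ tr(t yᵢ) xᵢ` for every `t`: the ideal `tr(T)` of `R` satisfies `tr(T) • T = T`, so it is
all of `R` by faithful flatness. An element `z` with `z + σ z = 1` then contracts both
cohomology complexes: `t = tz - σ(tz)` when `t + σ t = 0`, and `t = tz + σ(tz)` when `σ t = t`.
-/

section Involution

variable {T : Type*} [CommRing T] {F : Type*} [FunLike F T T] {σ : F}

theorem exists_eq_sub_map_of_add_map_eq_zero [RingHomClass F T T] {z : T} (hz : z + σ z = 1)
    {t : T} (ht : t + σ t = 0) : ∃ s, t = s - σ s :=
  ⟨t * z, by rw [map_mul, eq_neg_of_add_eq_zero_right ht]; linear_combination -t * hz⟩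

theorem exists_eq_add_map_of_map_eq [RingHomClass F T T] {z : T} (hz : z + σ z = 1) {t : T}
    (ht : σ t = t) :
    ∃ s, t = s + σ s :=
  ⟨t * z, by rw [map_mul, ht]; linear_combination -t * hz⟩

theorem exists_sum_mul_eq_one_and_sum_mul_map_eq_zero {R : Type*} [CommRing R] [Algebra R T]
    (e : T ⊗[R] T ≃ₗ[R] T × T) (he : ∀ x y : T, e (x ⊗ₜ y) = (x * y, x * σ y)) :
    ∃ S : Finset (T × T), ∑ p ∈ S, p.1 * p.2 = 1 ∧ ∑ p ∈ S, p.1 * σ p.2 = 0 := by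
  obtain ⟨S, hS⟩ := TensorProduct.exists_finset (e.symm (1, 0))
  have hsum := e.apply_symm_apply (1, 0)
  rw [hS, map_sum] at hsum
  simp only [he, Prod.ext_iff, Prod.fst_sum, Prod.snd_sum] at hsum
  exact ⟨S, hsum⟩

variable [RingHomClass F T T] (hσ : ∀ t, σ (σ t) = t) (R : Subring T)
  (hR : ∀ t, σ t = t ↔ t ∈ R)

def involutionTrace : T →ₗ[R] R where
  toFun t := ⟨t + σ t, (hR _).1 (by rw [map_add, hσ, add_comm])⟩
  map_add' a b := Subtype.ext (by simp only [map_add, Subring.coe_add]; ring)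
  map_smul' r a := Subtype.ext (by
    simp only [Subring.smul_def, smul_eq_mul, map_mul, (hR r).2 r.2, RingHom.id_apply,
      Subring.coe_mul]
    ring)

@[simp]
theorem coe_involutionTrace_apply (t : T) : (involutionTrace hσ R hR t : T) = t + σ t := rfl

theorem sum_involutionTrace_smul {S : Finset (T × T)} (h₁ : ∑ p ∈ S, p.1 * p.2 = 1)
    (h₀ : ∑ p ∈ S, p.1 * σ p.2 = 0) (t : T) :
    ∑ p ∈ S, involutionTrace hσ R hR (t * p.2) • p.1 = t := by
  calc ∑ p ∈ S, involutionTrace hσ R hR (t * p.2) • p.1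
      = t * ∑ p ∈ S, p.1 * p.2 + σ t * ∑ p ∈ S, p.1 * σ p.2 := by
        simp only [Finset.mul_sum, ← Finset.sum_add_distrib, Subring.smul_def, smul_eq_mul]
        exact Finset.sum_congr rfl fun p _ => by
          rw [coe_involutionTrace_apply, map_mul]; ring
    _ = t := by rw [h₁, h₀]; ring

theorem range_involutionTrace_eq_top [Module.FaithfullyFlat R T] {S : Finset (T × T)}
    (h₁ : ∑ p ∈ S, p.1 * p.2 = 1) (h₀ : ∑ p ∈ S, p.1 * σ p.2 = 0) :
    LinearMap.range (involutionTrace hσ R hR) = ⊤ := by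
  have hsmul : LinearMap.range (involutionTrace hσ R hR) • (⊤ : Submodule R T) = ⊤ :=
    eq_top_iff.2 fun t _ => sum_involutionTrace_smul hσ R hR h₁ h₀ t ▸
      Submodule.sum_mem _ fun _ _ =>
        Submodule.smul_mem_smul (LinearMap.mem_range_self _ _) Submodule.mem_top
  exact (Module.FaithfullyFlat.iff_flat_and_ideal_smul_eq_top R T).1 inferInstance |>.2 _ hsmul

end Involution

/-- Let `T` be a commutative ring with an action of `C₂ = {1, σ}` which is a Galois
extension of `R = T^{C₂}` with group `C₂` (i.e. `T` is faithfully flat over `R` and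
`T ⊗[R] T ≅ T × T` via `x ⊗ y ↦ (xy, x·σ(y))`).  Then the group cohomology of `C₂`
with coefficients in `T` vanishes in positive degrees and equals `R` in degree `0`:
`H^{odd} = ker(1+σ)/im(1−σ) = 0`, `H^{even>0} = ker(1−σ)/im(1+σ) = 0`, `H⁰ = T^σ = R`. -/
theorem stmt_13 (T : Type*) [CommRing T] (σ : T ≃+* T) (hσ : ∀ t, σ (σ t) = t)
    (R : Subring T) (hR : ∀ t, σ t = t ↔ t ∈ R)
    [Module.FaithfullyFlat R T]
    (hGalois : ∃ e : (T ⊗[R] T) ≃ₗ[R] T × T, ∀ x y : T, e (x ⊗ₜ y) = (x * y, x * σ y)) :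
    (∀ t : T, t + σ t = 0 → ∃ s : T, t = s - σ s) ∧
    (∀ t : T, σ t = t → ∃ s : T, t = s + σ s) ∧
    (∀ t : T, σ t = t ↔ t ∈ R) := by
  obtain ⟨e, he⟩ := hGalois
  obtain ⟨S, h₁, h₀⟩ := exists_sum_mul_eq_one_and_sum_mul_map_eq_zero e he
  obtain ⟨z, hz⟩ := LinearMap.range_eq_top.1 (range_involutionTrace_eq_top hσ R hR h₁ h₀) 1
  replace hz : z + σ z = 1 := by simpa using congrArg Subtype.val hz
  exact ⟨fun _ => exists_eq_sub_map_of_add_map_eq_zero hz,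
    fun _ => exists_eq_add_map_of_map_eq hz, hR⟩
end

section
/- Let p be an odd prime. There is no ring endomorphism φ of ℤ_p[ζ_p] (the ring of integers of the p-th cyclotomic extension of ℚ_p) such that φ(x) ≡ x^p mod p for all x. -/
/-!
If `φ ζ ≡ ζ ^ p = 1 mod p`, write `φ ζ = 1 + p t`. Expanding `Φ_p` to second order at `1`, with
`Φ_p(1) = p` and `Φ_p'(1) = (p choose 2)` divisible by `p` for odd `p`, gives
`0 = Φ_p(φ ζ) = p (1 + p u)`. As `p` is a nonzerodivisor in the free `ℤ_p`-module `ℤ_p[ζ_p]`,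
`p` would be a unit there; it is not, since `X ↦ 1` maps `ℤ_p[ζ_p]` onto `𝔽_p`.
-/

open Polynomial

section CyclotomicPrime

variable {R : Type*} [CommRing R] {p : ℕ} [hp : Fact p.Prime]

theorem eval_one_derivative_cyclotomic_prime :
    (cyclotomic p R).derivative.eval 1 = p.choose 2 := by
  rw [cyclotomic_prime, Nat.choose_two_right, ← Finset.sum_range_id]
  simp [derivative_X_pow, eval_finsetSum]

theorem exists_eval_one_add_mul_cyclotomic_prime (hp2 : p ≠ 2) (t : R) :
    ∃ u : R, (cyclotomic p R).eval (1 + p * t) = p * (1 + p * u) := by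
  obtain ⟨k, hk⟩ := binomExpansion (cyclotomic p R) 1 (p * t)
  obtain ⟨c, hc⟩ : p ∣ p.choose 2 :=
    hp.out.dvd_choose_self two_ne_zero (lt_of_le_of_ne hp.out.two_le (Ne.symm hp2))
  refine ⟨c * t + k * t ^ 2, ?_⟩
  rw [hk, eval_one_cyclotomic_prime, eval_one_derivative_cyclotomic_prime, hc]
  push_cast
  ring

theorem isUnit_of_eval_one_add_mul_cyclotomic_prime_eq_zero (hp2 : p ≠ 2)
    (hreg : IsLeftRegular (p : R)) {t : R} (h : (cyclotomic p R).eval (1 + p * t) = 0) :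
    IsUnit (p : R) := by
  obtain ⟨u, hu⟩ := exists_eval_one_add_mul_cyclotomic_prime hp2 t
  have hu' : 1 + p * u = 0 := hreg (show p * (1 + p * u) = p * 0 by rw [← hu, h, mul_zero])
  exact .of_mul_eq_one (-u) (by linear_combination -hu')

theorem RingHom.apply_sub_pow_notMem_span_of_isRoot_cyclotomic_prime (hp2 : p ≠ 2)
    (hreg : IsLeftRegular (p : R)) (hunit : ¬IsUnit (p : R)) {ζ : R}
    (hζ : (cyclotomic p R).IsRoot ζ) (φ : R →+* R) :
    φ ζ - ζ ^ p ∉ Ideal.span {(p : R)} := by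
  intro hmem
  obtain ⟨t, ht⟩ := Ideal.mem_span_singleton'.1 hmem
  have hζp : ζ ^ p = 1 :=
    isRoot_of_unity_of_root_cyclotomic (Nat.mem_divisors_self p hp.out.ne_zero) hζ
  have hφζ : (cyclotomic p R).IsRoot (φ ζ) := by simpa using hζ.map (f := φ)
  refine hunit (isUnit_of_eval_one_add_mul_cyclotomic_prime_eq_zero hp2 hreg (t := t) ?_)
  rw [show 1 + p * t = φ ζ by linear_combination ht - hζp]
  exact hφζ

theorem AdjoinRoot.not_isUnit_natCast_cyclotomic_prime (f : R →+* ZMod p) :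
    ¬IsUnit (p : AdjoinRoot (cyclotomic p R)) := by
  let g : AdjoinRoot (cyclotomic p R) →+* ZMod p :=
    AdjoinRoot.lift f 1 (by
      rw [eval₂_eq_eval_map, map_cyclotomic, eval_one_cyclotomic_prime, ZMod.natCast_self])
  intro hunit
  simpa [g] using hunit.map g

end CyclotomicPrime

theorem AdjoinRoot.isLeftRegular_of_ne_zero {R : Type*} [CommRing R] [IsDomain R] {f : R[X]}
    (hf : f.Monic) {r : R} (hr : r ≠ 0) : IsLeftRegular (AdjoinRoot.of f r) := by
  have := hf.free_adjoinRoot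
  intro a b hab
  exact smul_right_injective _ hr (by simpa [Algebra.smul_def] using hab)

/-- For `p` an odd prime, there is no ring endomorphism `φ` of
`ℤ_p[ζ_p] = ℤ_p[X]/(Φ_p(X))` such that `φ(x) ≡ x^p mod p` for all `x`. -/
theorem stmt_14 (p : ℕ) [Fact p.Prime] (hp : p ≠ 2) :
    ¬∃ φ : (Polynomial ℤ_[p] ⧸ Ideal.span {Polynomial.cyclotomic p ℤ_[p]}) →+*
        (Polynomial ℤ_[p] ⧸ Ideal.span {Polynomial.cyclotomic p ℤ_[p]}),
      ∀ x, φ x - x ^ p ∈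
        Ideal.span {(p : Polynomial ℤ_[p] ⧸ Ideal.span {Polynomial.cyclotomic p ℤ_[p]})} := by
  rintro ⟨φ, hφ⟩
  have hreg : IsLeftRegular (p : AdjoinRoot (cyclotomic p ℤ_[p])) := by
    simpa using AdjoinRoot.isLeftRegular_of_ne_zero (cyclotomic.monic p ℤ_[p])
      (Nat.cast_ne_zero.2 (NeZero.ne p) : (p : ℤ_[p]) ≠ 0)
  have hroot : (cyclotomic p (AdjoinRoot (cyclotomic p ℤ_[p]))).IsRoot (AdjoinRoot.root _) := by
    simpa using AdjoinRoot.isRoot_root (cyclotomic p ℤ_[p])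
  exact φ.apply_sub_pow_notMem_span_of_isRoot_cyclotomic_prime hp hreg
    (AdjoinRoot.not_isUnit_natCast_cyclotomic_prime PadicInt.toZMod) hroot (hφ _)
end
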